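/- The degenerate Bell numbers satisfy the inverse relation φ_{n,λ} = ∑_{k=0}^{n} C(n,k) (-1)^{n-k} ⟨1-λ⟩_{n-k,λ} φ_{k+1,λ} for all n ≥ 0. -/

import Mathlib

open Finset

/-- Generalized falling factorial `(x)_{n,lam} = x(x-lam)...(x-(n-1)lam)`. -/
noncomputable def dfall (lam x : ℝ) (n : ℕ) : ℝ := ∏ i ∈ Finset.range n, (x - i * lam)

/-- Generalized rising factorial `⟨x⟩_{n,lam} = x(x+lam)...(x+(n-1)lam)`. -/
noncomputable def drise (lam x : ℝ) (n : ℕ) : ℝ := ∏ i ∈ Finset.range n, (x + i * lam)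

lemma dfall_succ (lam x : ℝ) (n : ℕ) : dfall lam x (n+1) = dfall lam x n * (x - n * lam) :=
  Finset.prod_range_succ _ _

lemma dfall_shift (lam x : ℝ) (n : ℕ) : dfall lam x (n+1) = x * dfall lam (x - lam) n := by
  rw [dfall, Finset.prod_range_succ', dfall]
  push_cast
  rw [show x - 0*lam = x by ring, mul_comm]
  congr 1
  apply Finset.prod_congr rfl
  intro i _
  ring

lemma dfall_one_nat_eq_zero {j i : ℕ} (h : j < i) : dfall 1 (j:ℝ) i = 0 := by
  apply Finset.prod_eq_zero (Finset.mem_range.2 h)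
  simp

lemma dfall_one_nat_pos (j : ℕ) : 0 < dfall 1 (j:ℝ) j := by
  apply Finset.prod_pos
  intro i hi
  rw [Finset.mem_range] at hi
  have : (i:ℝ) < j := by exact_mod_cast hi
  linarith

lemma uniq (K : ℕ) (c : ℕ → ℝ) (h : ∀ x : ℝ, ∑ j ∈ range K, c j * dfall 1 x j = 0) :
    ∀ j < K, c j = 0 := by
  intro j
  induction j using Nat.strong_induction_on with
  | _ j ih =>
    intro hj
    have h1 := h (j:ℝ)
    rw [Finset.sum_eq_single_of_mem j (Finset.mem_range.2 hj)] at h1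
    · rcases mul_eq_zero.1 h1 with h2 | h2
      · exact h2
      · exact absurd h2 (dfall_one_nat_pos j).ne'
    · intro b hb hbj
      rcases lt_or_gt_of_ne hbj with h2 | h2
      · rw [ih b h2 (h2.trans hj), zero_mul]
      · rw [dfall_one_nat_eq_zero h2, mul_zero]

lemma coeff_sum_eq (N : ℕ) (a b : ℕ → ℝ)
    (h : ∀ x : ℝ, ∑ j ∈ range N, a j * dfall 1 x j = ∑ j ∈ range N, b j * dfall 1 x j) :
    ∑ j ∈ range N, a j = ∑ j ∈ range N, b j := by
  have h0 : ∀ x : ℝ, ∑ j ∈ range N, (a j - b j) * dfall 1 x j = 0 := by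
    intro x
    simp only [sub_mul, Finset.sum_sub_distrib, h x, sub_self]
  have h1 := uniq N _ h0
  have h2 : ∑ j ∈ range N, (a j - b j) = 0 :=
    Finset.sum_eq_zero (fun j hj => h1 j (mem_range.1 hj))
  rw [Finset.sum_sub_distrib] at h2
  linarith

lemma vand (lam : ℝ) : ∀ (n : ℕ) (x y : ℝ),
    dfall lam (x + y) n
      = ∑ k ∈ range (n+1), (n.choose k : ℝ) * dfall lam x k * dfall lam y (n-k) := by
  intro n
  induction n with
  | zero => intro x y; simp [dfall]
  | succ n ih =>
    intro x y
    rw [dfall_succ, ih, Finset.sum_mul]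
    have step : ∀ k ∈ range (n+1),
        (n.choose k : ℝ) * dfall lam x k * dfall lam y (n-k) * (x + y - n * lam)
          = (n.choose k : ℝ) * dfall lam x (k+1) * dfall lam y (n-k)
            + (n.choose k : ℝ) * dfall lam x k * dfall lam y (n-k+1) := by
      intro k hk
      rw [Finset.mem_range] at hk
      have hkn : k ≤ n := Nat.lt_succ_iff.mp hk
      have hcast : ((n-k : ℕ) : ℝ) = (n:ℝ) - k := by
        rw [Nat.cast_sub hkn]
      rw [dfall_succ lam x k, dfall_succ lam y (n-k), hcast]
      ring
    rw [Finset.sum_congr rfl step, Finset.sum_add_distrib]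
    -- RHS
    rw [Finset.sum_range_succ' (fun k => ((n+1).choose k : ℝ) * dfall lam x k * dfall lam y (n+1-k))]
    have e1 : ∀ k ∈ range (n+1),
        (((n+1).choose (k+1) : ℕ) : ℝ) * dfall lam x (k+1) * dfall lam y (n+1-(k+1))
          = (n.choose k : ℝ) * dfall lam x (k+1) * dfall lam y (n-k)
            + (n.choose (k+1) : ℝ) * dfall lam x (k+1) * dfall lam y (n-k) := by
      intro k hk
      have : (n+1).choose (k+1) = n.choose k + n.choose (k+1) := Nat.choose_succ_succ n k
      rw [Nat.succ_sub_succ, this]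
      push_cast
      ring
    rw [Finset.sum_congr rfl e1, Finset.sum_add_distrib]
    -- second sum on LHS: ∑_{k∈range(n+1)} C(n,k) f k g(n-k+1)
    have e2 : ∑ k ∈ range (n+1), (n.choose k : ℝ) * dfall lam x k * dfall lam y (n-k+1)
        = ∑ k ∈ range n, (n.choose (k+1) : ℝ) * dfall lam x (k+1) * dfall lam y (n-k)
          + dfall lam y (n+1) := by
      rw [Finset.sum_range_succ' (fun k => (n.choose k : ℝ) * dfall lam x k * dfall lam y (n-k+1))]
      congr 1
      · apply Finset.sum_congr rfl
        intro k hk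
        rw [Finset.mem_range] at hk
        congr 2
        omega
      · simp [dfall]
    have e3 : ∑ k ∈ range (n+1), (n.choose (k+1) : ℝ) * dfall lam x (k+1) * dfall lam y (n-k)
        = ∑ k ∈ range n, (n.choose (k+1) : ℝ) * dfall lam x (k+1) * dfall lam y (n-k) := by
      rw [Finset.sum_range_succ, Nat.choose_succ_self]
      simp
    rw [e2, e3]
    simp [Nat.choose_zero_right, dfall]
    ring

lemma dfall_neg (lam : ℝ) (m : ℕ) :
    dfall lam (lam - 1) m = (-1:ℝ)^m * drise lam (1 - lam) m := by
  rw [dfall, drise]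
  have h : ∀ i ∈ range m, lam - 1 - i*lam = (-1) * ((1-lam) + i*lam) := by
    intro i _; ring
  rw [Finset.prod_congr rfl h, Finset.prod_mul_distrib, Finset.prod_const, Finset.card_range]

theorem stmt9 (lam : ℝ) (S : ℕ → ℕ → ℝ)
    (hS : ∀ (n : ℕ) (x : ℝ), dfall lam x n = ∑ k ∈ Finset.range (n + 1), S n k * dfall 1 x k)
    (phi : ℕ → ℝ)
    (hphi : ∀ n : ℕ, phi n = ∑ k ∈ Finset.range (n + 1), S n k) (n : ℕ) :
    phi n = ∑ k ∈ Finset.range (n + 1),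
      (n.choose k : ℝ) * (-1 : ℝ) ^ (n - k) * drise lam (1 - lam) (n - k) * phi (k + 1) := by
  classical
  set T : ℕ → ℕ → ℝ := fun m j => if j < m + 1 then S m j else 0 with hT
  have hS' : ∀ m N, m ≤ N → ∀ x : ℝ,
      dfall lam x m = ∑ j ∈ range (N+1), T m j * dfall 1 x j := by
    intro m N hmN x
    rw [hS m x]
    have h1 : ∑ j ∈ range (m+1), S m j * dfall 1 x j
        = ∑ j ∈ range (m+1), T m j * dfall 1 x j := by
      apply Finset.sum_congr rfl
      intro j hj
      rw [Finset.mem_range] at hj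
      simp [hT, hj]
      intro h; exact absurd hj (by omega)
    rw [h1]
    apply Finset.sum_subset (Finset.range_subset_range.2 (by omega))
    intro j _ hj
    rw [Finset.mem_range] at hj
    have hj' : ¬ j < m + 1 := hj
    simp [hT, hj']
    intro h; exact absurd hj' (by omega)
  set c : ℕ → ℕ → ℝ :=
    fun k j => ∑ m ∈ range (k+1), (k.choose m : ℝ) * dfall lam (1-lam) (k-m) * T m j with hc
  have hA : ∀ (k : ℕ) (x : ℝ),
      dfall lam (x + (1-lam)) k = ∑ j ∈ range (k+1), c k j * dfall 1 x j := by
    intro k x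
    rw [vand lam k x (1-lam)]
    have h1 : ∀ m ∈ range (k+1),
        (k.choose m : ℝ) * dfall lam x m * dfall lam (1-lam) (k-m)
          = ∑ j ∈ range (k+1),
              (k.choose m : ℝ) * dfall lam (1-lam) (k-m) * T m j * dfall 1 x j := by
      intro m hm
      rw [Finset.mem_range] at hm
      rw [hS' m k (by omega) x, Finset.mul_sum, Finset.sum_mul]
      apply Finset.sum_congr rfl
      intro j _
      ring
    rw [Finset.sum_congr rfl h1, Finset.sum_comm]
    apply Finset.sum_congr rfl
    intro j _
    rw [hc]
    simp only
    rw [Finset.sum_mul]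
  have hB : ∀ k : ℕ, phi (k+1) = ∑ j ∈ range (k+1), c k j := by
    intro k
    have key : ∀ x : ℝ, ∑ j ∈ range (k+2), S (k+1) j * dfall 1 x j
        = ∑ j ∈ range (k+2), (if j = 0 then 0 else c k (j-1)) * dfall 1 x j := by
      intro x
      rw [← hS (k+1) x, dfall_shift, show x - lam = (x - 1) + (1 - lam) from by ring,
        hA k (x-1), Finset.mul_sum]
      rw [Finset.sum_range_succ' (fun j => (if j = 0 then 0 else c k (j-1)) * dfall 1 x j) (k+1)]
      simp only [Nat.add_sub_cancel, Nat.succ_ne_zero, if_neg, if_pos, zero_mul, add_zero,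
        ite_false, ite_true]
      apply Finset.sum_congr rfl
      intro j _
      rw [dfall_shift 1 x j]
      ring
    have h2 := coeff_sum_eq (k+2) _ _ key
    rw [hphi (k+1), h2,
      Finset.sum_range_succ' (fun j => if j = 0 then 0 else c k (j-1)) (k+1)]
    simp
  have key2 : ∀ x : ℝ, ∑ j ∈ range (n+1), S n j * dfall 1 x j
      = ∑ j ∈ range (n+1),
          (∑ k ∈ range (n+1), (n.choose k : ℝ) * dfall lam (lam-1) (n-k)
            * (if j < k+1 then c k j else 0)) * dfall 1 x j := by
    intro x
    rw [← hS n x,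
      show dfall lam x n = dfall lam ((x + (1-lam)) + (lam - 1)) n from by
        rw [show (x + (1-lam)) + (lam-1) = x from by ring],
      vand lam n (x + (1-lam)) (lam - 1)]
    have h1 : ∀ k ∈ range (n+1),
        (n.choose k : ℝ) * dfall lam (x + (1-lam)) k * dfall lam (lam-1) (n-k)
          = ∑ j ∈ range (n+1), (n.choose k : ℝ) * dfall lam (lam-1) (n-k)
              * (if j < k+1 then c k j else 0) * dfall 1 x j := by
      intro k hk
      rw [Finset.mem_range] at hk
      have h2 : dfall lam (x + (1-lam)) k
          = ∑ j ∈ range (n+1), (if j < k+1 then c k j else 0) * dfall 1 x j := by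
        rw [hA k x,
          show (∑ j ∈ range (k+1), c k j * dfall 1 x j)
            = ∑ j ∈ range (k+1), (if j < k+1 then c k j else 0) * dfall 1 x j from
            Finset.sum_congr rfl (by
              intro j hj; rw [Finset.mem_range] at hj; rw [if_pos hj])]
        apply Finset.sum_subset (Finset.range_subset_range.2 (by omega))
        intro j _ hj
        rw [Finset.mem_range] at hj
        rw [if_neg hj, zero_mul]
      rw [h2, Finset.mul_sum, Finset.sum_mul]
      apply Finset.sum_congr rfl
      intro j _
      ring
    rw [Finset.sum_congr rfl h1, Finset.sum_comm]
    exact Finset.sum_congr rfl (fun j _ => (Finset.sum_mul _ _ _).symm)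
  have h3 := coeff_sum_eq (n+1) _ _ key2
  rw [hphi n, h3, Finset.sum_comm]
  apply Finset.sum_congr rfl
  intro k hk
  rw [Finset.mem_range] at hk
  have h4 : ∑ j ∈ range (n+1), (if j < k+1 then c k j else 0) = ∑ j ∈ range (k+1), c k j := by
    rw [← Finset.sum_subset (Finset.range_subset_range.2 (show k+1 ≤ n+1 by omega))
      (fun j _ hj => by rw [Finset.mem_range] at hj; exact if_neg hj)]
    exact Finset.sum_congr rfl (fun j hj => by rw [Finset.mem_range] at hj; rw [if_pos hj])
  calc ∑ j ∈ range (n+1),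
        (n.choose k : ℝ) * dfall lam (lam-1) (n-k) * (if j < k+1 then c k j else 0)
      = (n.choose k : ℝ) * dfall lam (lam-1) (n-k)
          * ∑ j ∈ range (n+1), (if j < k+1 then c k j else 0) := by rw [Finset.mul_sum]
    _ = (n.choose k : ℝ) * dfall lam (lam-1) (n-k) * phi (k+1) := by rw [h4, ← hB k]
    _ = (n.choose k : ℝ) * (-1:ℝ)^(n-k) * drise lam (1-lam) (n-k) * phi (k+1) := by
        rw [dfall_neg]; ring
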